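/- arXiv:1108.1763 — 2 statements merged into one kernel-verified Lean document; each statement's English description precedes it below -/
import Mathlib

section
/- For each odd divisor d > 1 of 3^n − 1, the θ-periodic points α with ord(ψ(α)) = d number exactly φ(d), and they are partitioned into φ(d)/ord_d(−2) cycles of θ, each of length ord_d(−2). -/
open OnePoint

variable (F : Type*) [Field F] [DecidableEq F]

/-- The map `θ(x) = x + x⁻¹`, with `θ(0) = θ(∞) = ∞`. -/
def theta : OnePoint F → OnePoint F
  | Option.some x => if x = 0 then ∞ else Option.some (x + x⁻¹)
  | Option.none => ∞

/-- The inverse-square map `s(x) = x⁻²`, with `s(0) = ∞`, `s(∞) = 0`. -/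
def sMap : OnePoint F → OnePoint F
  | Option.some x => if x = 0 then ∞ else Option.some (x⁻¹ ^ 2)
  | Option.none => Option.some 0

/-- The involution `ψ(x) = (x+1)/(x-1)`, with `ψ(1) = ∞`, `ψ(∞) = 1`. -/
def psi : OnePoint F → OnePoint F
  | Option.some x => if x = 1 then ∞ else Option.some ((x + 1) / (x - 1))
  | Option.none => Option.some 1

/-!
In characteristic 3 the involution `ψ` conjugates `θ` to `s(x) = x⁻²`, so on the points
`ψ(u)` with `u ∈ F*` it acts as `u ↦ u⁻²`, whose `k`-th iterate is `u ↦ u ^ (-2)^k`. For `u` of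
order `d` this fixes `u` exactly when `(-2)^k ≡ 1 (mod d)`, so every such point has minimal period
`ord_d(-2)`. As `d` is odd, `u ↦ u⁻²` preserves the `φ(d)` elements of order `d` of the cyclic
group `F*`, and these fall into orbits of that common length.
-/

namespace Function

variable {α β : Type*} {f : α → α} {x y : α}

theorem Semiconj.minimalPeriod_eq {g : β → β} {e : α → β} (h : Semiconj e f g)
    (he : Injective e) (x : α) : minimalPeriod g (e x) = minimalPeriod f x := by
  rw [minimalPeriod_eq_minimalPeriod_iff]
  intro n
  simp only [IsPeriodicPt, IsFixedPt, ← (h.iterate_right n).eq, he.eq_iff]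

theorem range_iterate_subset_of_mem (hy : y ∈ Set.range (f^[·] x)) :
    Set.range (f^[·] y) ⊆ Set.range (f^[·] x) := by
  obtain ⟨j, rfl⟩ := hy
  rintro _ ⟨m, rfl⟩
  exact ⟨m + j, iterate_add_apply f m j x⟩

theorem range_iterate_eq_of_mem (hx : x ∈ periodicPts f) (hy : y ∈ Set.range (f^[·] x)) :
    Set.range (f^[·] y) = Set.range (f^[·] x) := by
  refine (range_iterate_subset_of_mem hy).antisymm (range_iterate_subset_of_mem ?_)
  obtain ⟨j, rfl⟩ := hy
  have hp := minimalPeriod_pos_of_mem_periodicPts hx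
  refine ⟨(minimalPeriod f x - 1) * j, ?_⟩
  simp only [← iterate_add_apply, Nat.sub_one_mul,
    Nat.sub_add_cancel (Nat.le_mul_of_pos_left j hp)]
  exact (isPeriodicPt_minimalPeriod f x).mul_const j

theorem ncard_range_iterate (hx : x ∈ periodicPts f) :
    (Set.range (f^[·] x)).ncard = minimalPeriod f x := by
  have hrange : Set.range (f^[·] x) = (f^[·] x) '' Set.Iio (minimalPeriod f x) := by
    refine (Set.image_subset_range _ _).antisymm' ?_
    rintro _ ⟨n, rfl⟩
    exact ⟨n % minimalPeriod f x, Nat.mod_lt _ (minimalPeriod_pos_of_mem_periodicPts hx),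
      iterate_mod_minimalPeriod_eq⟩
  rw [hrange, iterate_injOn_Iio_minimalPeriod.ncard_image, ← Finset.coe_Iio,
    Set.ncard_coe_finset, Nat.card_Iio]

theorem ncard_image_range_iterate_mul {s : Set α} (hs : s.Finite) (hf : Set.MapsTo f s s)
    {l : ℕ} (hl : 0 < l) (hper : ∀ x ∈ s, minimalPeriod f x = l) :
    ((fun x => Set.range (f^[·] x)) '' s).ncard * l = s.ncard := by
  set orbits := (fun x => Set.range (f^[·] x)) '' s
  have hperiodic : ∀ x ∈ s, x ∈ periodicPts f := fun x hx =>
    minimalPeriod_pos_iff_mem_periodicPts.mp (hper x hx ▸ hl)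
  have hunion : ⋃ C ∈ orbits, C = s := by
    refine subset_antisymm ?_ fun x hx =>
      Set.mem_biUnion (Set.mem_image_of_mem _ hx) (⟨0, rfl⟩ : x ∈ Set.range (f^[·] x))
    simp only [orbits, Set.biUnion_image, Set.iUnion_subset_iff]
    rintro x hx _ ⟨n, rfl⟩
    exact hf.iterate n hx
  have hdisj : orbits.PairwiseDisjoint id := by
    rintro _ ⟨x, hx, rfl⟩ _ ⟨y, hy, rfl⟩ hne
    refine Set.disjoint_left.mpr fun z hzx hzy => hne ?_
    dsimp only [id] at hzx hzy ⊢
    rw [← range_iterate_eq_of_mem (hperiodic x hx) hzx,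
      range_iterate_eq_of_mem (hperiodic y hy) hzy]
  calc orbits.ncard * l = ∑ᶠ C ∈ orbits, l := by
        rw [← finsum_one, finsum_mem_mul]
        simp only [one_mul]
    _ = ∑ᶠ C ∈ orbits, C.ncard := by
        refine finsum_mem_congr rfl ?_
        rintro _ ⟨x, hx, rfl⟩
        rw [ncard_range_iterate (hperiodic x hx), hper x hx]
    _ = s.ncard := by
        rw [← (hs.image _).ncard_biUnion
          (fun C hC => hs.subset ((Set.subset_biUnion_of_mem hC).trans hunion.subset)) hdisj]
        exact congrArg Set.ncard hunion

end Function

theorem minimalPeriod_zpow {G : Type*} [Group G] (u : G) (m : ℤ) :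
    Function.minimalPeriod (· ^ m) u = orderOf (m : ZMod (orderOf u)) := by
  rw [orderOf, Function.minimalPeriod_eq_minimalPeriod_iff]
  intro k
  rw [isPeriodicPt_mul_iff_pow_eq_one, Function.IsPeriodicPt, Function.IsFixedPt, zpow_iterate]
  nth_rewrite 2 [← zpow_one u]
  rw [zpow_eq_zpow_iff_modEq, ← ZMod.intCast_eq_intCast_iff]
  push_cast
  rfl

theorem orderOf_zpow_neg_two {G : Type*} [Group G] {u : G} (hu : Odd (orderOf u)) :
    orderOf (u ^ (-2 : ℤ)) = orderOf u := by
  rw [zpow_neg, orderOf_inv, zpow_ofNat, Nat.Coprime.orderOf_pow hu.coprime_two_right]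

theorem orderOf_neg_two_pos {d : ℕ} (hd : Odd d) : 0 < orderOf (-2 : ZMod d) := by
  have : NeZero d := ⟨hd.pos.ne'⟩
  have h2 : IsUnit ((2 : ℕ) : ZMod d) :=
    (ZMod.isUnit_iff_coprime 2 d).mpr (Nat.coprime_two_left.mpr hd)
  exact orderOf_pos_iff.mpr (IsUnit.isOfFinOrder (by simpa using h2.neg))

variable {F}

@[simp] lemma theta_infty : theta F ∞ = ∞ := rfl
@[simp] lemma psi_infty : psi F ∞ = (1 : F) := rfl
@[simp] lemma sMap_infty : sMap F ∞ = (0 : F) := rfl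
lemma theta_coe (x : F) : theta F x = if x = 0 then ∞ else ↑(x + x⁻¹) := rfl
lemma psi_coe (x : F) : psi F x = if x = 1 then ∞ else ↑((x + 1) / (x - 1)) := rfl
lemma sMap_coe (x : F) : sMap F x = if x = 0 then ∞ else ↑(x⁻¹ ^ 2) := rfl

theorem psi_involutive (h2 : (2 : F) ≠ 0) : Function.Involutive (psi F) := by
  intro a
  induction a using OnePoint.rec with
  | infty => simp [psi_coe]
  | coe x =>
    by_cases hx : x = 1
    · simp [hx, psi_coe]
    have hx' : x - 1 ≠ 0 := sub_ne_zero.mpr hx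
    have hy : (x + 1) / (x - 1) ≠ 1 := by
      rw [Ne, div_eq_one_iff_eq hx']
      intro h
      exact h2 (by linear_combination h)
    rw [psi_coe, if_neg hx, psi_coe, if_neg hy]
    congr 1
    field_simp
    rw [show x + 1 + (x - 1) = 2 * x by ring, show x + 1 - (x - 1) = 2 by ring,
      mul_div_cancel_left₀ x h2]

theorem semiconj_psi_theta_sMap (h3 : (3 : F) = 0) :
    Function.Semiconj (psi F) (theta F) (sMap F) := by
  intro a
  induction a using OnePoint.rec with
  | infty => simp [sMap_coe]
  | coe x =>
    by_cases hx0 : x = 0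
    · simp [hx0, theta_coe, psi_coe, sMap_coe]
    by_cases hx1 : x = 1
    · simp [hx1, theta_coe, psi_coe]
      linear_combination h3
    have hm1 : (-1 : F) ≠ 1 := fun h => by simpa using (by linear_combination h3 + h : (1 : F) = 0)
    by_cases hxm1 : x = -1
    · have h : (-1 : F) + -1 = 1 := by linear_combination -h3
      simp [hxm1, theta_coe, psi_coe, sMap_coe, h, hm1]
    -- in characteristic 3, `x² - x + 1 = (x + 1)²` and `x² + x + 1 = (x - 1)²`
    have hxp1 : x + 1 ≠ 0 := fun h => hxm1 (by linear_combination h)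
    have hx1' : x - 1 ≠ 0 := sub_ne_zero.mpr hx1
    have hq : x ^ 2 + 1 - x ≠ 0 := fun h =>
      hxp1 (pow_eq_zero_iff two_ne_zero |>.mp (by linear_combination h + x * h3))
    have hθ : x + x⁻¹ ≠ 1 := fun h => hq (by field_simp at h; linear_combination h)
    rw [theta_coe, if_neg hx0, psi_coe, if_neg hθ, psi_coe, if_neg hx1, sMap_coe,
      if_neg (div_ne_zero hxp1 hx1')]
    congr 1
    field_simp
    linear_combination (2 * x ^ 3 + 2 * x) * h3

theorem sMap_coe_unit (u : Fˣ) : sMap F (u : F) = ((u ^ (-2 : ℤ) : Fˣ) : F) := by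
  rw [sMap_coe, if_neg u.ne_zero]
  simp [zpow_neg]

theorem semiconj_psi_units_theta (h3 : (3 : F) = 0) :
    Function.Semiconj (fun u : Fˣ => psi F (u : F)) (· ^ (-2 : ℤ)) (theta F) := by
  have h2 : (2 : F) ≠ 0 := fun h => one_ne_zero (by linear_combination h3 - h)
  intro u
  calc psi F ((u ^ (-2 : ℤ) : Fˣ) : F) = psi F (sMap F (psi F (psi F (u : F)))) := by
        rw [psi_involutive h2, sMap_coe_unit]
    _ = theta F (psi F (u : F)) := by rw [← semiconj_psi_theta_sMap h3, psi_involutive h2]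

theorem setOf_psi_eq_coe_orderOf_eq (h2 : (2 : F) ≠ 0) {d : ℕ} (hd : d ≠ 0) :
    {α | ∃ b : F, psi F α = (b : OnePoint F) ∧ orderOf b = d} =
      (fun u : Fˣ => psi F (u : F)) '' {u | orderOf u = d} := by
  ext α
  constructor
  · rintro ⟨b, hb, hbd⟩
    have hb0 : b ≠ 0 := by
      rintro rfl
      exact hd (hbd ▸ orderOf_zero F)
    refine ⟨Units.mk0 b hb0, (orderOf_units (y := Units.mk0 b hb0)).symm.trans hbd, ?_⟩
    change psi F b = α
    rw [← hb, psi_involutive h2]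
  · rintro ⟨u, hu, rfl⟩
    exact ⟨u, psi_involutive h2 _, by rwa [orderOf_units]⟩

variable (F)

theorem cycles_of_length_ord [Fintype F] (n : ℕ)
    (hF : Fintype.card F = 3 ^ n) (d : ℕ) (hd2 : Odd d)
    (hd3 : d ∣ 3 ^ n - 1) :
    let S : Set (OnePoint F) :=
      {α | ∃ b : F, psi F α = (b : OnePoint F) ∧ orderOf b = d}
    let l := orderOf (-2 : ZMod d)
    S.ncard = Nat.totient d ∧
    (∀ α ∈ S, Function.minimalPeriod (theta F) α = l) ∧
    {C : Set (OnePoint F) | ∃ α ∈ S,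
        C = Set.range (fun i : ℕ => (theta F)^[i] α)}.ncard =
      Nat.totient d / l := by
  intro S l
  have h3 : (3 : F) = 0 :=
    eq_zero_of_pow_eq_zero (n := n) (by exact_mod_cast hF ▸ FiniteField.cast_card_eq_zero F)
  have h2 : (2 : F) ≠ 0 := fun h => one_ne_zero (by linear_combination h3 - h)
  set e : Fˣ → OnePoint F := fun u => psi F (u : F)
  have he : Function.Injective e :=
    (psi_involutive h2).injective.comp ((Option.some_injective F).comp Units.val_injective)
  have hS : S = e '' {u | orderOf u = d} := setOf_psi_eq_coe_orderOf_eq h2 hd2.pos.ne'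
  have hsemi := semiconj_psi_units_theta h3
  have hcard : S.ncard = Nat.totient d := by
    rw [hS, Set.ncard_image_of_injective _ he, Set.ncard_eq_toFinset_card', Set.toFinset_ofPred]
    exact IsCyclic.card_orderOf_eq_totient (by rwa [Fintype.card_units, hF])
  have hperiod : ∀ α ∈ S, Function.minimalPeriod (theta F) α = l := by
    rw [hS]
    rintro _ ⟨u, hu, rfl⟩
    rw [hsemi.minimalPeriod_eq he, minimalPeriod_zpow, hu]
    push_cast
    rfl
  have hmaps : Set.MapsTo (theta F) S S := by
    rw [hS]
    rintro _ ⟨u, hu, rfl⟩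
    exact ⟨u ^ (-2 : ℤ), (orderOf_zpow_neg_two (hu ▸ hd2)).trans hu, hsemi u⟩
  have hl : 0 < l := orderOf_neg_two_pos hd2
  refine ⟨hcard, hperiod, ?_⟩
  rw [← hcard, ← Function.ncard_image_range_iterate_mul (Set.toFinite S) hmaps hl hperiod,
    Nat.mul_div_cancel _ hl]
  congr 1
  ext C
  simp only [Set.mem_ofPred_eq, Set.mem_image, eq_comm]
end

section
/- For γ ∈ F_{3^n} \ {1, −1}, the equation θ(x) = γ has a solution x ∈ F_{3^n} if and only if ψ(γ) is a nonzero square in F_{3^n}, equivalently if and only if ord(ψ(γ)) divides (3^n − 1)/2. -/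
open OnePoint

variable (F : Type*) [Field F] [DecidableEq F]

/-! In characteristic 3, `x² + x + 1 = (x - 1)²` and `x² - x + 1 = (x + 1)²`, so
`θ(x) ± 1 = (x ∓ 1)² / x` and `ψ(θ(x)) = ((x - 1) / (x + 1))²` is a square. Conversely, if
`ψ(γ) = y²` then `x = (1 + y) / (1 - y)` has `θ(x) = ψ(y²) = ψ(ψ(γ)) = γ`, as `ψ` is an involution.
Euler's criterion turns squareness in `F_{3^n}` into the order condition. -/

section OnePointMaps

variable {F : Type*} [Field F] [DecidableEq F]

theorem theta_coe_of_ne_zero {x : F} (hx : x ≠ 0) : theta F x = ↑(x + x⁻¹) :=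
  if_neg hx

theorem psi_coe_of_ne_one {t : F} (ht : t ≠ 1) : psi F t = ↑((t + 1) / (t - 1)) :=
  if_neg ht

theorem exists_theta_eq_coe_iff (γ : F) :
    (∃ x : F, theta F x = γ) ↔ ∃ x : F, x ≠ 0 ∧ x + x⁻¹ = γ := by
  constructor
  · rintro ⟨x, hx⟩
    by_cases h0 : x = 0
    · simp [theta, h0] at hx
    · exact ⟨x, h0, OnePoint.coe_injective ((theta_coe_of_ne_zero h0).symm.trans hx)⟩
  · rintro ⟨x, h0, hx⟩
    exact ⟨x, by rw [theta_coe_of_ne_zero h0, hx]⟩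

end OnePointMaps

theorem isSquare_iff_exists_ne_zero_sq {M₀ : Type*} [MonoidWithZero M₀] {a : M₀} (ha : a ≠ 0) :
    IsSquare a ↔ ∃ y, y ≠ 0 ∧ y ^ 2 = a := by
  constructor
  · rintro ⟨y, rfl⟩
    exact ⟨y, fun hy => ha (by rw [hy, zero_mul]), sq y⟩
  · rintro ⟨y, -, rfl⟩
    exact ⟨y, sq y⟩

theorem FiniteField.isSquare_iff_orderOf_dvd {F : Type*} [Field F] [Fintype F]
    (hF : ringChar F ≠ 2) {a : F} (ha : a ≠ 0) :
    IsSquare a ↔ orderOf a ∣ Fintype.card F / 2 :=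
  (isSquare_iff hF ha).trans orderOf_dvd_iff_pow_eq_one.symm

section Involution

variable {F : Type*} [Field F] {t : F}

theorem div_add_one_div_div_sub_one (h2 : (2 : F) ≠ 0) (ht : t ≠ 1) :
    ((t + 1) / (t - 1) + 1) / ((t + 1) / (t - 1) - 1) = t := by
  have ht' : t - 1 ≠ 0 := sub_ne_zero.mpr ht
  rw [div_add_one ht', div_sub_one ht', div_div_div_cancel_right₀ ht',
    show t + 1 + (t - 1) = 2 * t by ring, show t + 1 - (t - 1) = 2 by ring,
    mul_div_cancel_left₀ t h2]

theorem add_one_div_sub_one_ne_one (h2 : (2 : F) ≠ 0) (ht : t ≠ 1) :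
    (t + 1) / (t - 1) ≠ 1 := by
  rw [Ne, div_eq_one_iff_eq (sub_ne_zero.mpr ht)]
  exact fun h => h2 (by linear_combination h)

end Involution

section CharThree

variable {F : Type*} [Field F] [CharP F 3]

theorem CharP.three_eq_zero : (3 : F) = 0 := by
  exact_mod_cast CharP.cast_eq_zero F 3

theorem CharP.two_ne_zero_of_three : (2 : F) ≠ 0 := by
  have h3 : (3 : F) = 0 := CharP.three_eq_zero
  exact fun h => one_ne_zero (by linear_combination h3 - h : (1 : F) = 0)

theorem add_inv_add_one_div_add_inv_sub_one {x : F} (hx : x ≠ 0) :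
    (x + x⁻¹ + 1) / (x + x⁻¹ - 1) = ((x - 1) / (x + 1)) ^ 2 := by
  have h3 : (3 : F) = 0 := CharP.three_eq_zero
  calc (x + x⁻¹ + 1) / (x + x⁻¹ - 1) = ((x - 1) ^ 2 / x) / ((x + 1) ^ 2 / x) := by
        congr 1
        · field_simp
          linear_combination x * h3
        · field_simp
          linear_combination -x * h3
    _ = _ := by rw [div_div_div_cancel_right₀ hx, div_pow]

theorem one_add_div_one_sub_add_inv {y : F} (hy1 : y ≠ 1) (hy2 : y ≠ -1) :
    (1 + y) / (1 - y) + ((1 + y) / (1 - y))⁻¹ = (y ^ 2 + 1) / (y ^ 2 - 1) := by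
  have h3 : (3 : F) = 0 := CharP.three_eq_zero
  have hm : 1 - y ≠ 0 := sub_ne_zero.mpr hy1.symm
  have hp : 1 + y ≠ 0 := fun h => hy2 (by linear_combination h)
  have hs : y ^ 2 - 1 ≠ 0 := fun h => mul_ne_zero hm hp (by linear_combination -h)
  rw [inv_div]
  field_simp
  linear_combination (y ^ 2 + 1) * (y ^ 2 - 1) * h3

theorem exists_add_inv_eq_iff_isSquare {γ : F} (hγ : γ ≠ 1) :
    (∃ x : F, x ≠ 0 ∧ x + x⁻¹ = γ) ↔ IsSquare ((γ + 1) / (γ - 1)) := by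
  have h2 : (2 : F) ≠ 0 := CharP.two_ne_zero_of_three
  constructor
  · rintro ⟨x, hx0, rfl⟩
    exact ⟨(x - 1) / (x + 1), by rw [add_inv_add_one_div_add_inv_sub_one hx0, sq]⟩
  · rintro ⟨y, hy⟩
    have hy_sq : y ^ 2 ≠ 1 := by
      rw [sq, ← hy]; exact add_one_div_sub_one_ne_one h2 hγ
    have hy1 : y ≠ 1 := by rintro rfl; norm_num at hy_sq
    have hy2 : y ≠ -1 := by rintro rfl; norm_num at hy_sq
    refine ⟨(1 + y) / (1 - y), div_ne_zero (fun h => hy2 (by linear_combination h))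
      (sub_ne_zero.mpr hy1.symm), ?_⟩
    rw [one_add_div_one_sub_add_inv hy1 hy2, sq, ← hy,
      div_add_one_div_div_sub_one h2 hγ]

end CharThree

theorem solvable_iff_square [Fintype F] (n : ℕ)
    (hF : Fintype.card F = 3 ^ n)
    (γ : F) (hγ1 : γ ≠ 1) (hγ2 : γ ≠ -1)
    (b : F) (hb : psi F (γ : OnePoint F) = (b : OnePoint F)) :
    ((∃ x : F, theta F (x : OnePoint F) = (γ : OnePoint F)) ↔
      (b ≠ 0 ∧ ∃ y : F, y ≠ 0 ∧ y ^ 2 = b)) ∧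
    ((∃ x : F, theta F (x : OnePoint F) = (γ : OnePoint F)) ↔
      orderOf b ∣ (3 ^ n - 1) / 2) := by
  have : CharP F 3 := charP_of_card_eq_prime_pow hF
  obtain rfl : (γ + 1) / (γ - 1) = b :=
    OnePoint.coe_injective ((psi_coe_of_ne_one hγ1).symm.trans hb)
  have hb0 : (γ + 1) / (γ - 1) ≠ 0 :=
    div_ne_zero (fun h => hγ2 (by linear_combination h)) (sub_ne_zero.mpr hγ1)
  have hhalf : 3 ^ n / 2 = (3 ^ n - 1) / 2 := by
    obtain ⟨k, hk⟩ : Odd (3 ^ n) := Odd.pow (by decide)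
    omega
  have hchar : ringChar F ≠ 2 := by rw [ringChar.eq F 3]; decide
  have hsolv : (∃ x : F, theta F x = γ) ↔ IsSquare ((γ + 1) / (γ - 1)) :=
    (exists_theta_eq_coe_iff γ).trans (exists_add_inv_eq_iff_isSquare hγ1)
  refine ⟨hsolv.trans ((isSquare_iff_exists_ne_zero_sq hb0).trans (and_iff_right hb0).symm),
    hsolv.trans ?_⟩
  rw [FiniteField.isSquare_iff_orderOf_dvd hchar hb0, hF, hhalf]
end
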